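/- arXiv:2505.08967 — 2 statements merged into one kernel-verified Lean document; each statement's English description precedes it below -/
import Mathlib

section
/- Let 𝒜 be the 5×5 sign pattern with rows (+, +, 0, 0, 0), (0, 0, +, +, +), (−, −, 0, 0, 0), (0, 0, −, 0, 0), (0, 0, 0, −, −). Then 𝒜 allows the nSMP but does not require the nSMP; in particular, the realization A ∈ Q(𝒜) with rows (1, 1, 0, 0, 0), (0, 0, 1, 1, 1), (−1, −1, 0, 0, 0), (0, 0, −1, 0, 0), (0, 0, 0, −1, −1) does not have the nSMP. -/
open Matrix

def QClass {n : ℕ} (𝒜 : Matrix (Fin n) (Fin n) SignType) : Set (Matrix (Fin n) (Fin n) ℝ) :=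
  {A | ∀ i j, SignType.sign (A i j) = 𝒜 i j}

def HasNSMP {n : ℕ} (A : Matrix (Fin n) (Fin n) ℝ) : Prop :=
  ∀ X : Matrix (Fin n) (Fin n) ℝ,
    A.hadamard X = 0 →
    A * Xᵀ - Xᵀ * A = 0 →
    (∀ k : ℕ, k < n → (Xᵀ * A ^ k).trace = 0) →
    X = 0

def RequiresNSMP {n : ℕ} (𝒜 : Matrix (Fin n) (Fin n) SignType) : Prop :=
  ∀ A ∈ QClass 𝒜, HasNSMP A

def AllowsNSMP {n : ℕ} (𝒜 : Matrix (Fin n) (Fin n) SignType) : Prop :=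
  ∃ A ∈ QClass 𝒜, HasNSMP A

noncomputable def Smat : Matrix (Fin 5) (Fin 5) SignType :=
  !![1, 1, 0, 0, 0; 0, 0, 1, 1, 1; -1, -1, 0, 0, 0; 0, 0, -1, 0, 0; 0, 0, 0, -1, -1]

noncomputable def Amat : Matrix (Fin 5) (Fin 5) ℝ :=
  !![1, 1, 0, 0, 0; 0, 0, 1, 1, 1; -1, -1, 0, 0, 0; 0, 0, -1, 0, 0; 0, 0, 0, -1, -1]

noncomputable def Bmat : Matrix (Fin 5) (Fin 5) ℝ :=
  !![2, 1, 0, 0, 0; 0, 0, 1, 1, 1; -1, -1, 0, 0, 0; 0, 0, -1, 0, 0; 0, 0, 0, -1, -1]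

noncomputable def Xmat : Matrix (Fin 5) (Fin 5) ℝ :=
  !![0,0,0,-1,1; 0,0,0,0,0; 0,0,0,-1,1; 0,0,0,0,0; 0,0,0,0,0]

lemma hAQ : Amat ∈ QClass Smat := by
  intro i j
  fin_cases i <;> fin_cases j <;>
    norm_num [Amat, Smat, Matrix.vecHead, Matrix.vecTail]

lemma hBQ : Bmat ∈ QClass Smat := by
  intro i j
  fin_cases i <;> fin_cases j <;>
    norm_num [Bmat, Smat, Matrix.vecHead, Matrix.vecTail]

set_option maxHeartbeats 1000000 in
lemma Bmat_nsmp : HasNSMP Bmat := by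
  intro X h1 h2 _
  have hz : ∀ i j, Bmat i j * X i j = 0 := by
    intro i j
    have := congrFun (congrFun h1 i) j
    simpa [Matrix.hadamard] using this
  have z00 : X 0 0 = 0 := by have := hz 0 0; simp [Bmat] at this; linarith
  have z01 : X 0 1 = 0 := by have := hz 0 1; simp [Bmat] at this; linarith
  have z12 : X 1 2 = 0 := by have := hz 1 2; simp [Bmat] at this; linarith
  have z13 : X 1 3 = 0 := by have := hz 1 3; simp [Bmat] at this; linarith
  have z14 : X 1 4 = 0 := by have := hz 1 4; simp [Bmat] at this; linarith
  have z20 : X 2 0 = 0 := by have := hz 2 0; simp [Bmat] at this; linarith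
  have z21 : X 2 1 = 0 := by have := hz 2 1; simp [Bmat] at this; linarith
  have z32 : X 3 2 = 0 := by have := hz 3 2; simp [Bmat] at this; linarith
  have z43 : X 4 3 = 0 := by have := hz 4 3; simp [Bmat] at this; linarith
  have z44 : X 4 4 = 0 := by have := hz 4 4; simp [Bmat] at this; linarith
  have h2' : Bmat * Xᵀ = Xᵀ * Bmat := sub_eq_zero.mp h2
  have hc : ∀ i j, ∑ k, Bmat i k * X j k = ∑ k, X k i * Bmat k j := by
    intro i j
    have := congrFun (congrFun h2' i) j
    simpa [Matrix.mul_apply, Matrix.transpose_apply] using this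
  have E00 := hc 0 0; have E01 := hc 0 1; have E02 := hc 0 2; have E03 := hc 0 3; have E04 := hc 0 4
  have E10 := hc 1 0; have E11 := hc 1 1; have E12 := hc 1 2; have E13 := hc 1 3; have E14 := hc 1 4
  have E20 := hc 2 0; have E21 := hc 2 1; have E22 := hc 2 2; have E23 := hc 2 3; have E24 := hc 2 4
  have E30 := hc 3 0; have E31 := hc 3 1; have E32 := hc 3 2; have E33 := hc 3 3; have E34 := hc 3 4
  have E40 := hc 4 0; have E41 := hc 4 1; have E42 := hc 4 2; have E43 := hc 4 3; have E44 := hc 4 4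
  simp [Bmat, Fin.sum_univ_five, Matrix.vecHead, Matrix.vecTail] at E00 E01 E02 E03 E04 E10 E11 E12 E13 E14 E20 E21 E22 E23 E24 E30 E31 E32 E33 E34 E40 E41 E42 E43 E44
  have x10 : X 1 0 = 0 := by linarith
  have x11 : X 1 1 = 0 := by linarith
  have x30 : X 3 0 = 0 := by linarith
  have x31 : X 3 1 = 0 := by linarith
  have x40 : X 4 0 = 0 := by linarith
  have x41 : X 4 1 = 0 := by linarith
  have x02 : X 0 2 = 0 := by linarith
  have x22 : X 2 2 = 0 := by linarith
  have x42 : X 4 2 = 0 := by linarith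
  have x03 : X 0 3 = 0 := by linarith
  have x23 : X 2 3 = 0 := by linarith
  have x33 : X 3 3 = 0 := by linarith
  have x04 : X 0 4 = 0 := by linarith
  have x24 : X 2 4 = 0 := by linarith
  have x34 : X 3 4 = 0 := by linarith
  ext i j
  fin_cases i <;> fin_cases j <;> simp only [Matrix.zero_apply] <;> assumption

set_option maxHeartbeats 1000000 in
lemma hA2 : Amat ^ 2 = !![1,1,1,1,1; -1,-1,-1,-1,-1; -1,-1,-1,-1,-1; 1,1,0,0,0; 0,0,1,1,1] := by
  rw [pow_two]
  ext i j
  fin_cases i <;> fin_cases j <;>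
    simp [Amat, Matrix.mul_apply, Fin.sum_univ_five, Matrix.vecHead, Matrix.vecTail]

set_option maxHeartbeats 1000000 in
lemma hA3 : Amat ^ 3 = !![0,0,0,0,0; 0,0,0,0,0; 0,0,0,0,0; 1,1,1,1,1; -1,-1,-1,-1,-1] := by
  rw [pow_succ, hA2]
  ext i j
  fin_cases i <;> fin_cases j <;>
    simp [Amat, Matrix.mul_apply, Fin.sum_univ_five, Matrix.vecHead, Matrix.vecTail]

set_option maxHeartbeats 1000000 in
lemma hA4 : Amat ^ 4 = 0 := by
  rw [pow_succ, hA3]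
  ext i j
  fin_cases i <;> fin_cases j <;>
    simp [Amat, Matrix.mul_apply, Fin.sum_univ_five, Matrix.vecHead, Matrix.vecTail]

set_option maxHeartbeats 1000000 in
lemma hAbad : ¬ HasNSMP Amat := by
  intro h
  have hX : Xmat = 0 := by
    apply h
    · ext i j
      fin_cases i <;> fin_cases j <;>
        norm_num [Amat, Xmat, Matrix.hadamard, Matrix.vecHead, Matrix.vecTail]
    · ext i j
      fin_cases i <;> fin_cases j <;>
        simp [Amat, Xmat, Matrix.mul_apply, Fin.sum_univ_five, Matrix.vecMul, dotProduct,
          Matrix.vecHead, Matrix.vecTail]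
    · intro k hk
      interval_cases k
      · simp [Matrix.trace, Matrix.diag, Xmat, Fin.sum_univ_five,
          Matrix.vecHead, Matrix.vecTail]
      · simp [pow_one, Matrix.trace, Matrix.diag, Matrix.mul_apply, Amat, Xmat,
          Fin.sum_univ_five, Matrix.vecHead, Matrix.vecTail]
      · rw [hA2]
        simp [Matrix.trace, Matrix.diag, Matrix.mul_apply, Xmat,
          Fin.sum_univ_five, Matrix.vecHead, Matrix.vecTail]
      · rw [hA3]
        simp [Matrix.trace, Matrix.diag, Matrix.mul_apply, Xmat,
          Fin.sum_univ_five, Matrix.vecHead, Matrix.vecTail]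
      · rw [hA4]
        simp [Matrix.trace, Matrix.diag, Matrix.mul_apply, Xmat,
          Fin.sum_univ_five, Matrix.vecHead, Matrix.vecTail]
  have := congrFun (congrFun hX 0) 3
  simp [Xmat] at this

theorem stmt_17 :
    let 𝒜 : Matrix (Fin 5) (Fin 5) SignType :=
      !![1, 1, 0, 0, 0;
         0, 0, 1, 1, 1;
         -1, -1, 0, 0, 0;
         0, 0, -1, 0, 0;
         0, 0, 0, -1, -1]
    let A : Matrix (Fin 5) (Fin 5) ℝ :=
      !![1, 1, 0, 0, 0;
         0, 0, 1, 1, 1;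
         -1, -1, 0, 0, 0;
         0, 0, -1, 0, 0;
         0, 0, 0, -1, -1]
    AllowsNSMP 𝒜 ∧ ¬ RequiresNSMP 𝒜 ∧ A ∈ QClass 𝒜 ∧ ¬ HasNSMP A := by
  intro 𝒜 A
  exact ⟨⟨Bmat, hBQ, Bmat_nsmp⟩, fun h => hAbad (h Amat hAQ), hAQ, hAbad⟩
end

section
/- Let n ≥ 2 and let 𝒜 be an n×n sign pattern whose last row is entirely zero (so 𝒜 has block form [[S, B],[0, 0]] where S is the leading (n−1)×(n−1) principal subpattern and the last diagonal block is the 1×1 zero pattern). Then 𝒜 requires the nSMP if and only if S requires the nSMP and S is sign-nonsingular. -/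
open Matrix

/-! ### Auxiliary lemmas -/

lemma trace_transpose_mul' {n : ℕ} (X M : Matrix (Fin n) (Fin n) ℝ) :
    (Xᵀ * M).trace = ∑ i, ∑ j, X i j * M i j := by
  rw [Matrix.trace]
  simp only [Matrix.diag, Matrix.mul_apply, Matrix.transpose_apply]
  exact Finset.sum_comm

lemma ch_sum {n : ℕ} (M Y : Matrix (Fin n) (Fin n) ℝ) :
    ∑ i ∈ Finset.range (n+1), M.charpoly.coeff i * (Yᵀ * M ^ i).trace = 0 := by
  have h0 : (Polynomial.aeval M) M.charpoly = 0 := M.aeval_self_charpoly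
  have hdeg : M.charpoly.natDegree = n := by rw [Matrix.charpoly_natDegree_eq_dim]; simp
  rw [Polynomial.aeval_eq_sum_range, hdeg] at h0
  have h1 := congrArg (fun N => (Yᵀ * N).trace) h0
  simpa [Finset.mul_sum, Matrix.mul_smul, Matrix.trace_smul, smul_eq_mul] using h1

lemma trace_pow_dim {n : ℕ} (M Y : Matrix (Fin n) (Fin n) ℝ)
    (h : ∀ k < n, (Yᵀ * M ^ k).trace = 0) : (Yᵀ * M ^ n).trace = 0 := by
  have hs := ch_sum M Y
  rw [Finset.sum_range_succ] at hs
  rw [Finset.sum_eq_zero (fun i hi => by rw [h i (Finset.mem_range.mp hi), mul_zero]),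
    zero_add] at hs
  have hdeg : M.charpoly.natDegree = n := by rw [Matrix.charpoly_natDegree_eq_dim]; simp
  have hc : M.charpoly.coeff n = 1 := by
    have := M.charpoly_monic.coeff_natDegree
    rwa [hdeg] at this
  rwa [hc, one_mul] at hs

lemma trace_zero_of_det {n : ℕ} (M Y : Matrix (Fin n) (Fin n) ℝ) (hdet : M.det ≠ 0)
    (h : ∀ k, 1 ≤ k → k ≤ n → (Yᵀ * M ^ k).trace = 0) : (Yᵀ * M ^ 0).trace = 0 := by
  have hs := ch_sum M Y
  rw [Finset.sum_range_succ'] at hs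
  rw [Finset.sum_eq_zero (fun i hi => by
    rw [h (i+1) (Nat.le_add_left 1 i) (Nat.succ_le_of_lt (Finset.mem_range.mp hi)), mul_zero]),
    zero_add] at hs
  have c0 : M.charpoly.coeff 0 ≠ 0 := by
    intro hc
    apply hdet
    rw [Matrix.det_eq_sign_charpoly_coeff, hc, mul_zero]
  exact (mul_eq_zero.mp hs).resolve_left c0

lemma mulVec_zero_of_det {n : ℕ} {M : Matrix (Fin n) (Fin n) ℝ} (hdet : M.det ≠ 0)
    {v : Fin n → ℝ} (hv : M *ᵥ v = 0) : v = 0 := by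
  by_contra h
  exact hdet (Matrix.exists_mulVec_eq_zero_iff.mp ⟨v, h, hv⟩)

lemma pow_last_row {n : ℕ} {A : Matrix (Fin (n+1)) (Fin (n+1)) ℝ}
    (h0 : ∀ j, A (Fin.last n) j = 0) {k : ℕ} (hk : k ≠ 0) (j : Fin (n+1)) :
    (A ^ k) (Fin.last n) j = 0 := by
  obtain ⟨m, rfl⟩ := Nat.exists_eq_succ_of_ne_zero hk
  rw [pow_succ']
  simp [Matrix.mul_apply, h0]

lemma pow_submatrix {n : ℕ} {A : Matrix (Fin (n+1)) (Fin (n+1)) ℝ}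
    (h0 : ∀ j, A (Fin.last n) j = 0) (k : ℕ) :
    (A ^ k).submatrix Fin.castSucc Fin.castSucc
      = (A.submatrix Fin.castSucc Fin.castSucc) ^ k := by
  induction k with
  | zero =>
    ext i j
    simp [Matrix.one_apply, Fin.castSucc_inj]
  | succ m ih =>
    ext i j
    rw [pow_succ, pow_succ, ← ih]
    simp only [Matrix.submatrix_apply, Matrix.mul_apply]
    rw [Fin.sum_univ_castSucc]
    simp [h0]

lemma trace_block {n : ℕ} {X M : Matrix (Fin (n+1)) (Fin (n+1)) ℝ}
    (hM : ∀ j, M (Fin.last n) j = 0)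
    (hX : ∀ i : Fin n, X i.castSucc (Fin.last n) = 0) :
    (Xᵀ * M).trace = ((X.submatrix Fin.castSucc Fin.castSucc)ᵀ
      * (M.submatrix Fin.castSucc Fin.castSucc)).trace := by
  rw [trace_transpose_mul', trace_transpose_mul']
  rw [Fin.sum_univ_castSucc]
  have hz : ∑ j, X (Fin.last n) j * M (Fin.last n) j = 0 := by simp [hM]
  rw [hz, add_zero]
  refine Finset.sum_congr rfl fun i _ => ?_
  rw [Fin.sum_univ_castSucc, hX, zero_mul, add_zero]
  simp

lemma sign_coe_real (s : SignType) : SignType.sign ((s : ℝ)) = s := by cases s <;> simp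

/-! ### The block constructions -/

def extMat {n : ℕ} (𝒜 : Matrix (Fin (n+1)) (Fin (n+1)) SignType)
    (S : Matrix (Fin n) (Fin n) ℝ) : Matrix (Fin (n+1)) (Fin (n+1)) ℝ :=
  Fin.snoc (fun i => Fin.snoc (S i) ((𝒜 i.castSucc (Fin.last n) : ℝ))) 0

@[simp] lemma extMat_cc {n : ℕ} (𝒜 : Matrix (Fin (n+1)) (Fin (n+1)) SignType)
    (S : Matrix (Fin n) (Fin n) ℝ) (i j : Fin n) :
    extMat 𝒜 S i.castSucc j.castSucc = S i j := by
  simp [extMat]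

@[simp] lemma extMat_cl {n : ℕ} (𝒜 : Matrix (Fin (n+1)) (Fin (n+1)) SignType)
    (S : Matrix (Fin n) (Fin n) ℝ) (i : Fin n) :
    extMat 𝒜 S i.castSucc (Fin.last n) = (𝒜 i.castSucc (Fin.last n) : ℝ) := by
  simp [extMat]

@[simp] lemma extMat_l {n : ℕ} (𝒜 : Matrix (Fin (n+1)) (Fin (n+1)) SignType)
    (S : Matrix (Fin n) (Fin n) ℝ) (j : Fin (n+1)) :
    extMat 𝒜 S (Fin.last n) j = 0 := by
  simp [extMat]

lemma extMat_mem {n : ℕ} (𝒜 : Matrix (Fin (n+1)) (Fin (n+1)) SignType)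
    (hlast : ∀ j, 𝒜 (Fin.last n) j = 0)
    {S : Matrix (Fin n) (Fin n) ℝ}
    (hS : S ∈ QClass (𝒜.submatrix Fin.castSucc Fin.castSucc)) :
    extMat 𝒜 S ∈ QClass 𝒜 := by
  intro i j
  induction i using Fin.lastCases with
  | last => simp [hlast]
  | cast i =>
    induction j using Fin.lastCases with
    | last => simp [sign_coe_real]
    | cast j => simpa using hS i j

def extX {n : ℕ} (X₀ : Matrix (Fin n) (Fin n) ℝ) (w : Fin n → ℝ) :
    Matrix (Fin (n+1)) (Fin (n+1)) ℝ :=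
  Fin.snoc (fun i => Fin.snoc (X₀ i) 0) (Fin.snoc w 0)

@[simp] lemma extX_cc {n : ℕ} (X₀ : Matrix (Fin n) (Fin n) ℝ) (w : Fin n → ℝ) (i j : Fin n) :
    extX X₀ w i.castSucc j.castSucc = X₀ i j := by simp [extX]

@[simp] lemma extX_cl {n : ℕ} (X₀ : Matrix (Fin n) (Fin n) ℝ) (w : Fin n → ℝ) (i : Fin n) :
    extX X₀ w i.castSucc (Fin.last n) = 0 := by simp [extX]

@[simp] lemma extX_lc {n : ℕ} (X₀ : Matrix (Fin n) (Fin n) ℝ) (w : Fin n → ℝ) (j : Fin n) :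
    extX X₀ w (Fin.last n) j.castSucc = w j := by simp [extX]

@[simp] lemma extX_ll {n : ℕ} (X₀ : Matrix (Fin n) (Fin n) ℝ) (w : Fin n → ℝ) :
    extX X₀ w (Fin.last n) (Fin.last n) = 0 := by simp [extX]

lemma extX_conds {n : ℕ} (hn : 1 ≤ n) (𝒜 : Matrix (Fin (n+1)) (Fin (n+1)) SignType)
    {S X₀ : Matrix (Fin n) (Fin n) ℝ} {w : Fin n → ℝ}
    (hH : S.hadamard X₀ = 0)
    (hC : S * X₀ᵀ - X₀ᵀ * S = 0)
    (hT : ∀ k < n, (X₀ᵀ * S ^ k).trace = 0)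
    (hw : S *ᵥ w = X₀ᵀ *ᵥ (fun i => (𝒜 i.castSucc (Fin.last n) : ℝ))) :
    (extMat 𝒜 S).hadamard (extX X₀ w) = 0 ∧
    extMat 𝒜 S * (extX X₀ w)ᵀ - (extX X₀ w)ᵀ * extMat 𝒜 S = 0 ∧
    ∀ k : ℕ, k < n + 1 → ((extX X₀ w)ᵀ * extMat 𝒜 S ^ k).trace = 0 := by
  have hA0 : ∀ j, extMat 𝒜 S (Fin.last n) j = 0 := extMat_l 𝒜 S
  refine ⟨?_, ?_, ?_⟩
  · ext i j
    induction i using Fin.lastCases with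
    | last => simp [Matrix.hadamard_apply]
    | cast i =>
      induction j using Fin.lastCases with
      | last => simp [Matrix.hadamard_apply]
      | cast j =>
        have := congrFun (congrFun hH i) j
        simpa [Matrix.hadamard_apply] using this
  · ext i j
    simp only [Matrix.sub_apply, Matrix.mul_apply, Matrix.transpose_apply, Matrix.zero_apply]
    induction i using Fin.lastCases with
    | last =>
      rw [Fin.sum_univ_castSucc, Fin.sum_univ_castSucc]
      induction j using Fin.lastCases with
      | last => simp
      | cast j => simp
    | cast i =>
      rw [Fin.sum_univ_castSucc, Fin.sum_univ_castSucc]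
      induction j using Fin.lastCases with
      | last =>
        have := congrFun hw i
        simp only [Matrix.mulVec, dotProduct, Matrix.transpose_apply] at this
        simp [this]
      | cast j =>
        have := congrFun (congrFun hC i) j
        simp only [Matrix.sub_apply, Matrix.mul_apply, Matrix.transpose_apply,
          Matrix.zero_apply] at this
        simpa using this
  · intro k hk
    rcases Nat.eq_zero_or_pos k with rfl | hk1
    · have h0 := hT 0 hn
      rw [pow_zero, mul_one, Matrix.trace_transpose] at h0 ⊢
      rw [Matrix.trace, Fin.sum_univ_castSucc]
      simpa [Matrix.trace, Matrix.diag] using h0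
    · have hk0 : k ≠ 0 := hk1.ne'
      rw [trace_block (pow_last_row hA0 hk0) (extX_cl X₀ w)]
      have e1 : (extX X₀ w).submatrix Fin.castSucc Fin.castSucc = X₀ := by ext i j; simp
      have e2 : (extMat 𝒜 S ^ k).submatrix Fin.castSucc Fin.castSucc = S ^ k := by
        rw [pow_submatrix hA0]
        congr 1
        ext i j
        simp
      rw [e1, e2]
      rcases Nat.lt_or_ge k n with h | h
      · exact hT k h
      · have hkn : k = n := le_antisymm (Nat.lt_succ_iff.mp hk) h
        subst hkn
        exact trace_pow_dim S X₀ hT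

theorem stmt_18 {n : ℕ} (hn : 1 ≤ n) (𝒜 : Matrix (Fin (n + 1)) (Fin (n + 1)) SignType)
    (hlast : ∀ j : Fin (n + 1), 𝒜 (Fin.last n) j = 0) :
    RequiresNSMP 𝒜 ↔
      (RequiresNSMP (𝒜.submatrix (Fin.castSucc) (Fin.castSucc)) ∧
       ∀ B ∈ QClass (𝒜.submatrix (Fin.castSucc) (Fin.castSucc)), B.det ≠ 0) := by
  constructor
  · intro hreq
    have hdet : ∀ B ∈ QClass (𝒜.submatrix Fin.castSucc Fin.castSucc), B.det ≠ 0 := by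
      intro B hB hdB
      obtain ⟨v, hv0, hv⟩ := Matrix.exists_mulVec_eq_zero_iff.mpr hdB
      have hw : B *ᵥ v
          = (0 : Matrix (Fin n) (Fin n) ℝ)ᵀ *ᵥ (fun i => (𝒜 i.castSucc (Fin.last n) : ℝ)) := by
        rw [hv]; simp
      obtain ⟨h1, h2, h3⟩ := extX_conds hn 𝒜 (by simp) (by simp) (by simp) hw
      have hX0 := hreq _ (extMat_mem 𝒜 hlast hB) _ h1 h2 h3
      apply hv0
      ext t
      have := congrFun (congrFun hX0 (Fin.last n)) t.castSucc
      simpa using this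
    refine ⟨?_, hdet⟩
    intro S hS X₀ hH hC hT
    have hdS := hdet S hS
    have hw : S *ᵥ (S⁻¹ *ᵥ (X₀ᵀ *ᵥ (fun i => (𝒜 i.castSucc (Fin.last n) : ℝ))))
        = X₀ᵀ *ᵥ (fun i => (𝒜 i.castSucc (Fin.last n) : ℝ)) := by
      rw [Matrix.mulVec_mulVec, Matrix.mul_nonsing_inv S (isUnit_iff_ne_zero.mpr hdS),
        Matrix.one_mulVec]
    obtain ⟨h1, h2, h3⟩ := extX_conds hn 𝒜 hH hC hT hw
    have hX0 := hreq _ (extMat_mem 𝒜 hlast hS) _ h1 h2 h3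
    ext i j
    have := congrFun (congrFun hX0 i.castSucc) j.castSucc
    simpa using this
  · rintro ⟨hsub, hdet⟩
    intro A hA X hH hC hT
    have hSmem : A.submatrix Fin.castSucc Fin.castSucc
        ∈ QClass (𝒜.submatrix Fin.castSucc Fin.castSucc) := fun i j => hA _ _
    have hdS : (A.submatrix Fin.castSucc Fin.castSucc).det ≠ 0 := hdet _ hSmem
    have hA0 : ∀ j, A (Fin.last n) j = 0 := by
      intro j
      have := hA (Fin.last n) j
      rw [hlast j] at this
      exact sign_eq_zero_iff.mp this
    -- the entries X (castSucc i) (last) vanish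
    have hx : ∀ i : Fin n, X i.castSucc (Fin.last n) = 0 := by
      have hxv : (A.submatrix Fin.castSucc Fin.castSucc)ᵀ *ᵥ
          (fun i => X i.castSucc (Fin.last n)) = 0 := by
        ext j
        have := congrFun (congrFun hC (Fin.last n)) j.castSucc
        simp only [Matrix.sub_apply, Matrix.mul_apply, Matrix.transpose_apply,
          Matrix.zero_apply] at this
        rw [Fin.sum_univ_castSucc, Fin.sum_univ_castSucc] at this
        simp only [hA0, zero_mul, mul_zero, Finset.sum_const_zero, add_zero, zero_add,
          zero_sub, neg_eq_zero] at this
        simpa [Matrix.mulVec, dotProduct, mul_comm] using this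
      have h := mulVec_zero_of_det (by rwa [Matrix.det_transpose]) hxv
      exact fun i => congrFun h i
    -- the principal block of X vanishes
    have hYH : (A.submatrix Fin.castSucc Fin.castSucc).hadamard
        (X.submatrix Fin.castSucc Fin.castSucc) = 0 := by
      ext i j
      have := congrFun (congrFun hH i.castSucc) j.castSucc
      simpa [Matrix.hadamard_apply] using this
    have hYC : A.submatrix Fin.castSucc Fin.castSucc * (X.submatrix Fin.castSucc Fin.castSucc)ᵀ
        - (X.submatrix Fin.castSucc Fin.castSucc)ᵀ * A.submatrix Fin.castSucc Fin.castSucc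
        = 0 := by
      ext i j
      have := congrFun (congrFun hC i.castSucc) j.castSucc
      simp only [Matrix.sub_apply, Matrix.mul_apply, Matrix.transpose_apply,
        Matrix.zero_apply] at this
      rw [Fin.sum_univ_castSucc, Fin.sum_univ_castSucc] at this
      simp only [hA0, hx, mul_zero, zero_mul, add_zero] at this
      simp only [Matrix.sub_apply, Matrix.mul_apply, Matrix.transpose_apply,
        Matrix.zero_apply, Matrix.submatrix_apply]
      exact this
    have hYT1 : ∀ k, 1 ≤ k → k ≤ n →
        ((X.submatrix Fin.castSucc Fin.castSucc)ᵀ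
          * (A.submatrix Fin.castSucc Fin.castSucc) ^ k).trace = 0 := by
      intro k h1k hkn
      have := hT k (Nat.lt_succ_of_le hkn)
      rwa [trace_block (pow_last_row hA0 (by omega)) hx, pow_submatrix hA0] at this
    have hYT : ∀ k, k < n →
        ((X.submatrix Fin.castSucc Fin.castSucc)ᵀ
          * (A.submatrix Fin.castSucc Fin.castSucc) ^ k).trace = 0 := by
      intro k hkn
      rcases Nat.eq_zero_or_pos k with rfl | h1
      · exact trace_zero_of_det _ _ hdS hYT1
      · exact hYT1 k h1 (le_of_lt hkn)
    have hY0 : X.submatrix Fin.castSucc Fin.castSucc = 0 :=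
      hsub _ hSmem _ hYH hYC hYT
    have hYe : ∀ t i : Fin n, X t.castSucc i.castSucc = 0 := by
      intro t i
      have := congrFun (congrFun hY0 t) i
      simpa using this
    -- the (last, last) entry vanishes
    have hz : X (Fin.last n) (Fin.last n) = 0 := by
      have := hT 0 (Nat.succ_pos n)
      rw [pow_zero, mul_one, Matrix.trace_transpose, Matrix.trace, Fin.sum_univ_castSucc] at this
      simpa [Matrix.diag, hYe] using this
    -- the last row of X vanishes
    have hw : ∀ j : Fin n, X (Fin.last n) j.castSucc = 0 := by
      have hwv : (A.submatrix Fin.castSucc Fin.castSucc) *ᵥ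
          (fun j => X (Fin.last n) j.castSucc) = 0 := by
        ext i
        have := congrFun (congrFun hC i.castSucc) (Fin.last n)
        simp only [Matrix.sub_apply, Matrix.mul_apply, Matrix.transpose_apply,
          Matrix.zero_apply] at this
        rw [Fin.sum_univ_castSucc, Fin.sum_univ_castSucc] at this
        simp only [hA0, hz, hYe, mul_zero, zero_mul, add_zero, Finset.sum_const_zero,
          sub_zero, zero_add] at this
        simpa [Matrix.mulVec, dotProduct] using this
      have h := mulVec_zero_of_det hdS hwv
      exact fun j => congrFun h j
    ext i j
    induction i using Fin.lastCases with
    | last =>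
      induction j using Fin.lastCases with
      | last => simpa using hz
      | cast j => simpa using hw j
    | cast i =>
      induction j using Fin.lastCases with
      | last => simpa using hx i
      | cast j => simpa using hYe i j
end
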